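/- arXiv:1303.3690 — 2 statements merged into one kernel-verified Lean document; each statement's English description precedes it below -/
import Mathlib

section
/- Upper bound for Bowen entropy of a product via upper capacity entropy: for any Z_1, Z_2 ⊆ X, h^B(Z_1 × Z_2) ≤ h^B(Z_1) + h^U(Z_2), where the product is taken in the product system. -/
/-!
Cover `Z₁` by Bowen balls `B_n(x, ε)` with `Σ exp(-s n)` small, and, for each length `n` that
occurs, cover `Z₂` by the `ε`-balls around a maximal `(n, ε/2)`-separated subset of `Z₂`; there are
`r_n(Z₂, ε/2) ≤ exp(t n)` of them once `n` is large, whenever `t > h^U(Z₂)`. The products of these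
balls are Bowen balls of `T × T` covering `Z₁ × Z₂` with `Σ exp(-(s + t) n)` just as small, so
`M^{s+t}(Z₁ × Z₂) = 0` whenever `M^s(Z₁) = 0`.
-/

open Filter Set
open scoped ENNReal NNReal

namespace BowenProduct

variable {X : Type*} [PseudoMetricSpace X]

/-- The open Bowen ball of order `n` and radius `ε` around `x`:
the ball for the `n`-th Bowen metric `d_n(x,y) = max_{0 ≤ k ≤ n-1} d(T^k x, T^k y)`. -/
def bowenBall (T : X → X) (n : ℕ) (x : X) (ε : ℝ) : Set X :=
  {y | ∀ k < n, dist (T^[k] x) (T^[k] y) < ε}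

/-- The closed Bowen ball of order `n` and radius `ε` around `x`. -/
def bowenClosedBall (T : X → X) (n : ℕ) (x : X) (ε : ℝ) : Set X :=
  {y | ∀ k < n, dist (T^[k] x) (T^[k] y) ≤ ε}

/-- `M^s_{N,ε}(Z)`: the infimum of `Σ_i exp(-s n_i)` over all finite or countable families
`{B_{n_i}(x_i, ε)}` with `x_i ∈ X`, `n_i ≥ N`, covering `Z`. -/
noncomputable def coverSum (T : X → X) (s : ℝ) (N : ℕ) (ε : ℝ) (Z : Set X) : ℝ≥0∞ :=
  ⨅ (F : Set (X × ℕ)) (_ : F.Countable) (_ : ∀ p ∈ F, N ≤ p.2)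
    (_ : Z ⊆ ⋃ p ∈ F, bowenBall T p.2 p.1 ε),
    ∑' p : F, ENNReal.ofReal (Real.exp (-s * ((p : X × ℕ).2 : ℝ)))

/-- `M^s_ε(Z) = lim_{N → ∞} M^s_{N,ε}(Z)`; the limit exists and equals the supremum
since `M^s_{N,ε}(Z)` does not decrease as `N` increases. -/
noncomputable def coverMeasureEps (T : X → X) (s ε : ℝ) (Z : Set X) : ℝ≥0∞ :=
  ⨆ N : ℕ, coverSum T s N ε Z

/-- `M^s(Z) = lim_{ε → 0} M^s_ε(Z)`; the limit exists and equals the supremum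
since `M^s_ε(Z)` does not decrease as `ε` decreases. -/
noncomputable def coverMeasure (T : X → X) (s : ℝ) (Z : Set X) : ℝ≥0∞ :=
  ⨆ (ε : ℝ) (_ : 0 < ε), coverMeasureEps T s ε Z

/-- Bowen's topological entropy `h^B(Z)`: the critical value of `s ≥ 0` at which
`M^s(Z)` jumps from `∞` to `0`, i.e. `inf {s ≥ 0 : M^s(Z) = 0}` (and `∞` if no such `s`). -/
noncomputable def bowenEntropy (T : X → X) (Z : Set X) : ℝ≥0∞ :=
  ⨅ (s : ℝ≥0) (_ : coverMeasure T (s : ℝ) Z = 0), (s : ℝ≥0∞)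

/-- `P^s_{N,ε}(Z)`: the supremum of `Σ_i exp(-s n_i)` over all finite or countable pairwise
disjoint families `{B̄_{n_i}(x_i, ε)}` with `x_i ∈ Z`, `n_i ≥ N`. -/
noncomputable def packingSum (T : X → X) (s : ℝ) (N : ℕ) (ε : ℝ) (Z : Set X) : ℝ≥0∞ :=
  ⨆ (F : Set (X × ℕ)) (_ : F.Countable) (_ : ∀ p ∈ F, p.1 ∈ Z ∧ N ≤ p.2)
    (_ : F.PairwiseDisjoint fun p => bowenClosedBall T p.2 p.1 ε),
    ∑' p : F, ENNReal.ofReal (Real.exp (-s * ((p : X × ℕ).2 : ℝ)))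

/-- `P^s_ε(Z) = lim_{N → ∞} P^s_{N,ε}(Z)`; the limit exists and equals the infimum
since `P^s_{N,ε}(Z)` does not increase as `N` increases. -/
noncomputable def packingPre (T : X → X) (s ε : ℝ) (Z : Set X) : ℝ≥0∞ :=
  ⨅ N : ℕ, packingSum T s N ε Z

/-- `𝒫^s_ε(Z) = inf { Σ_{i=1}^∞ P^s_ε(Z_i) : ∪_{i=1}^∞ Z_i ⊇ Z }`. -/
noncomputable def packingMeasureEps (T : X → X) (s ε : ℝ) (Z : Set X) : ℝ≥0∞ :=
  ⨅ (Zs : ℕ → Set X) (_ : Z ⊆ ⋃ i, Zs i), ∑' i, packingPre T s ε (Zs i)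

/-- `h^P(Z, ε)`: the critical value of `s ≥ 0` at which `𝒫^s_ε(Z)` jumps from `∞` to `0`. -/
noncomputable def packingEntropyEps (T : X → X) (ε : ℝ) (Z : Set X) : ℝ≥0∞ :=
  ⨅ (s : ℝ≥0) (_ : packingMeasureEps T (s : ℝ) ε Z = 0), (s : ℝ≥0∞)

/-- The packing topological entropy `h^P(Z) = lim_{ε → 0} h^P(Z, ε)`; the limit exists and
equals the supremum since `h^P(Z,ε)` increases as `ε` decreases. -/
noncomputable def packingEntropy (T : X → X) (Z : Set X) : ℝ≥0∞ :=
  ⨆ (ε : ℝ) (_ : 0 < ε), packingEntropyEps T ε Z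

/-- `r_n(Z, ε)`: the largest cardinality of an `(n,ε)`-separated subset `E ⊆ Z`, i.e. a set in
which distinct points are at Bowen `d_n`-distance `> ε`. -/
noncomputable def maxSep (T : X → X) (Z : Set X) (n : ℕ) (ε : ℝ) : ℕ :=
  sSup {k : ℕ | ∃ E : Finset X, ↑E ⊆ Z ∧
    (∀ x ∈ E, ∀ y ∈ E, x ≠ y → ∃ i < n, ε < dist (T^[i] x) (T^[i] y)) ∧ E.card = k}

/-- The upper capacity topological entropy
`h^U(Z) = lim_{ε → 0} limsup_{n → ∞} (1/n) log r_n(Z, ε)`; the limit over `ε` equals the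
supremum by monotonicity. -/
noncomputable def upperCapacityEntropy (T : X → X) (Z : Set X) : ℝ≥0∞ :=
  ⨆ (ε : ℝ) (_ : 0 < ε),
    Filter.atTop.limsup fun n : ℕ => ENNReal.ofReal (Real.log (maxSep T Z n ε) / n)

end BowenProduct

namespace BowenProduct

variable {X : Type*} [PseudoMetricSpace X] {T : X → X}

def IsBowenSeparated (T : X → X) (n : ℕ) (ε : ℝ) (E : Set X) : Prop :=
  E.Pairwise fun x y => ∃ k < n, ε < dist (T^[k] x) (T^[k] y)

theorem IsBowenSeparated.insert {n : ℕ} {ε : ℝ} {E : Set X} {z : X}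
    (hE : IsBowenSeparated T n ε E) (hz : ∀ y ∈ E, ∃ k < n, ε < dist (T^[k] y) (T^[k] z)) :
    IsBowenSeparated T n ε (insert z E) :=
  Set.Pairwise.insert hE fun y hy _ =>
    let ⟨k, hk, h⟩ := hz y hy
    ⟨⟨k, hk, by rwa [dist_comm]⟩, ⟨k, hk, h⟩⟩

/-- The orbit segment `x ↦ (T^[k] x)_{k < n}` maps `(n, ε)`-separated sets injectively onto
`ε`-separated subsets of the compact space `Fin n → X`, which are uniformly bounded in size. -/
theorem exists_card_le_of_isBowenSeparated [CompactSpace X] (n : ℕ) {ε : ℝ} (hε : 0 < ε) :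
    ∃ C : ℕ, ∀ E : Finset X, IsBowenSeparated T n ε E → E.card ≤ C := by
  let orbit : X → Fin n → X := fun x k => T^[k] x
  obtain ⟨t, -, ht, htcov⟩ :=
    finite_cover_balls_of_compact (isCompact_univ (X := Fin n → X)) (half_pos hε)
  have hcenter : ∀ x, ∃ c ∈ t, orbit x ∈ Metric.ball c (ε / 2) := fun x => by
    simpa using htcov (mem_univ (orbit x))
  choose c hct hc using hcenter
  refine ⟨ht.toFinset.card, fun E hE => Finset.card_le_card_of_injOn c
    (fun x _ => ht.mem_toFinset.2 (hct x)) fun x hx y hy hxy => ?_⟩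
  by_contra hne
  obtain ⟨k, hk, hsep⟩ := hE hx hy hne
  have hclose : dist (orbit x) (orbit y) < ε := by
    calc dist (orbit x) (orbit y) ≤ dist (orbit x) (c x) + dist (c y) (orbit y) := by
          rw [hxy]; exact dist_triangle _ _ _
      _ < ε / 2 + ε / 2 := add_lt_add (hc x) (by rw [dist_comm]; exact hc y)
      _ = ε := add_halves ε
  exact (hsep.trans_le (dist_le_pi_dist (orbit x) (orbit y) ⟨k, hk⟩)).not_gt hclose

theorem exists_finset_card_eq_maxSep_cover [CompactSpace X] (Z : Set X) (n : ℕ) {ε : ℝ}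
    (hε : 0 < ε) :
    ∃ E : Finset X, E.card = maxSep T Z n (ε / 2) ∧ Z ⊆ ⋃ y ∈ E, bowenBall T n y ε := by
  classical
  obtain ⟨C, hC⟩ := exists_card_le_of_isBowenSeparated (T := T) n (half_pos hε)
  set S : Set ℕ := {m | ∃ E : Finset X, ↑E ⊆ Z ∧ IsBowenSeparated T n (ε / 2) E ∧ E.card = m}
  have hbdd : BddAbove S := ⟨C, by rintro _ ⟨E, -, hE, rfl⟩; exact hC E hE⟩
  have hne : S.Nonempty := ⟨0, ∅, by simp [IsBowenSeparated]⟩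
  obtain ⟨E, hEZ, hEsep, hEcard⟩ := Nat.sSup_mem hne hbdd
  refine ⟨E, hEcard, fun z hz => ?_⟩
  by_contra hz_uncov
  have hfar : ∀ y ∈ E, ∃ k < n, ε / 2 < dist (T^[k] y) (T^[k] z) := fun y hy => by
    have : z ∉ bowenBall T n y ε := fun h => hz_uncov (mem_biUnion hy h)
    simp only [bowenBall, mem_ofPred_eq, not_forall, not_lt] at this
    obtain ⟨k, hk, hle⟩ := this
    exact ⟨k, hk, (half_lt_self hε).trans_le hle⟩
  have hzE : z ∉ E := fun hz => by
    obtain ⟨k, -, hk⟩ := hfar z hz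
    rw [dist_self] at hk
    linarith
  have hbig := le_csSup hbdd ⟨insert z E, by
    rw [Finset.coe_insert]; exact insert_subset hz hEZ, by
    rw [Finset.coe_insert]; exact hEsep.insert hfar, rfl⟩
  rw [Finset.card_insert_of_notMem hzE, ← hEcard] at hbig
  omega

theorem bowenBall_prod (n : ℕ) (x y : X) (ε : ℝ) :
    bowenBall (Prod.map T T) n (x, y) ε = bowenBall T n x ε ×ˢ bowenBall T n y ε := by
  ext ⟨a, b⟩
  simp only [bowenBall, Prod.map_iterate, Prod.dist_eq, mem_prod, mem_ofPred_eq, Prod.map_apply,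
    max_lt_iff, forall_and]

theorem coverSum_le_tsum {s ε : ℝ} {N : ℕ} {Z : Set X} {ι : Type*} [Countable ι]
    (f : ι → X × ℕ) (hN : ∀ i, N ≤ (f i).2) (hZ : Z ⊆ ⋃ i, bowenBall T (f i).2 (f i).1 ε) :
    coverSum T s N ε Z ≤ ∑' i, ENNReal.ofReal (Real.exp (-s * (f i).2)) :=
  iInf_le_of_le (range f) <| iInf_le_of_le (countable_range f) <|
    iInf_le_of_le (forall_mem_range.2 hN) <| iInf_le_of_le (by rwa [biUnion_range]) <|
      ENNReal.tsum_le_tsum_comp_of_surjective rangeFactorization_surjective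
        fun p : range f => ENNReal.ofReal (Real.exp (-s * (p : X × ℕ).2))

theorem bowenEntropy_le_of_coverMeasure_eq_zero {Z : Set X} {s : ℝ≥0}
    (h : coverMeasure T s Z = 0) : bowenEntropy T Z ≤ s :=
  iInf₂_le s h

theorem coverSum_le_coverMeasure {s ε : ℝ} (hε : 0 < ε) (N : ℕ) (Z : Set X) :
    coverSum T s N ε Z ≤ coverMeasure T s Z :=
  (le_iSup (fun N => coverSum T s N ε Z) N).trans
    (le_iSup₂ (f := fun ε (_ : 0 < ε) => coverMeasureEps T s ε Z) ε hε)

theorem natCast_mul_ofReal_exp_le {s t : ℝ} {n m : ℕ} (hm : (m : ℝ) ≤ Real.exp (t * n)) :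
    m * ENNReal.ofReal (Real.exp (-(s + t) * n)) ≤ ENNReal.ofReal (Real.exp (-s * n)) := by
  rw [← ENNReal.ofReal_natCast, ← ENNReal.ofReal_mul (Nat.cast_nonneg m)]
  refine ENNReal.ofReal_le_ofReal ?_
  calc (m : ℝ) * Real.exp (-(s + t) * n) ≤ Real.exp (t * n) * Real.exp (-(s + t) * n) :=
        mul_le_mul_of_nonneg_right hm (Real.exp_pos _).le
    _ = Real.exp (-s * n) := by rw [← Real.exp_add]; ring_nf

/-- Refining each ball `B_n(x, ε)` of a cover of `Z₁` by the product with the balls `B_n(y, ε)`,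
`y ∈ E n`, of a cover of `Z₂` multiplies its weight by `#(E n) · exp(-t n) ≤ 1`. -/
theorem coverSum_prod_le {s t ε : ℝ} {N M : ℕ} {Z₁ Z₂ : Set X} (hNM : N ≤ M) (E : ℕ → Finset X)
    (hcov : ∀ n ≥ M, Z₂ ⊆ ⋃ y ∈ E n, bowenBall T n y ε)
    (hcard : ∀ n ≥ M, ((E n).card : ℝ) ≤ Real.exp (t * n)) :
    coverSum (Prod.map T T) (s + t) N ε (Z₁ ×ˢ Z₂) ≤ coverSum T s M ε Z₁ := by
  refine le_iInf fun F => le_iInf fun hF => le_iInf fun hFM => le_iInf fun hFZ => ?_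
  have : Countable F := hF.to_subtype
  let f : (Σ p : F, E (p : X × ℕ).2) → (X × X) × ℕ := fun i => ((i.1.1.1, i.2), i.1.1.2)
  have hprod_cov : Z₁ ×ˢ Z₂ ⊆ ⋃ i, bowenBall (Prod.map T T) (f i).2 (f i).1 ε := by
    rintro ⟨a, b⟩ ⟨ha, hb⟩
    obtain ⟨p, hp, hap⟩ := mem_iUnion₂.1 (hFZ ha)
    obtain ⟨y, hy, hby⟩ := mem_iUnion₂.1 (hcov p.2 (hFM p hp) hb)
    exact mem_iUnion.2 ⟨⟨⟨p, hp⟩, ⟨y, hy⟩⟩, by rw [bowenBall_prod]; exact ⟨hap, hby⟩⟩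
  calc coverSum (Prod.map T T) (s + t) N ε (Z₁ ×ˢ Z₂)
      ≤ ∑' i, ENNReal.ofReal (Real.exp (-(s + t) * (f i).2)) :=
        coverSum_le_tsum f (fun i => hNM.trans (hFM _ i.1.2)) hprod_cov
    _ = ∑' p : F,
          (E (p : X × ℕ).2).card * ENNReal.ofReal (Real.exp (-(s + t) * (p : X × ℕ).2)) := by
        rw [ENNReal.tsum_sigma']
        simp [f, tsum_fintype]
    _ ≤ ∑' p : F, ENNReal.ofReal (Real.exp (-s * (p : X × ℕ).2)) :=
        ENNReal.tsum_le_tsum fun p => natCast_mul_ofReal_exp_le (hcard _ (hFM _ p.2))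

theorem eventually_maxSep_le_exp {Z : Set X} {t : ℝ≥0} (ht : upperCapacityEntropy T Z < t)
    {ε : ℝ} (hε : 0 < ε) : ∀ᶠ n in atTop, (maxSep T Z n ε : ℝ) ≤ Real.exp (t * n) := by
  have hlimsup : atTop.limsup (fun n : ℕ => ENNReal.ofReal (Real.log (maxSep T Z n ε) / n)) < t :=
    (le_iSup₂ (f := fun δ (_ : 0 < δ) =>
      atTop.limsup fun n : ℕ => ENNReal.ofReal (Real.log (maxSep T Z n δ) / n)) ε hε).trans_lt ht
  filter_upwards [eventually_lt_of_limsup_lt hlimsup, eventually_gt_atTop 0] with n hn hn0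
  rcases (maxSep T Z n ε).eq_zero_or_pos with h0 | hpos
  · simp [h0, (Real.exp_pos _).le]
  · rw [ENNReal.ofReal_lt_coe_iff (by positivity), div_lt_iff₀ (by positivity)] at hn
    exact ((Real.log_lt_iff_lt_exp (by positivity)).1 hn).le

theorem coverMeasure_prod_eq_zero [CompactSpace X] {Z₁ Z₂ : Set X} {s t : ℝ≥0}
    (hs : coverMeasure T s Z₁ = 0) (ht : upperCapacityEntropy T Z₂ < t) :
    coverMeasure (Prod.map T T) ↑(s + t) (Z₁ ×ˢ Z₂) = 0 := by
  simp only [coverMeasure, coverMeasureEps, ENNReal.iSup_eq_zero]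
  intro ε hε N
  obtain ⟨M, hM⟩ := eventually_atTop.1 (eventually_maxSep_le_exp ht (half_pos hε))
  choose E hEcard hEcov using fun n => exists_finset_card_eq_maxSep_cover (T := T) Z₂ n hε
  refine nonpos_iff_eq_zero.1 ?_
  calc coverSum (Prod.map T T) ↑(s + t) N ε (Z₁ ×ˢ Z₂) ≤ coverSum T s (max M N) ε Z₁ := by
        rw [NNReal.coe_add]
        exact coverSum_prod_le (le_max_right M N) E (fun n _ => hEcov n)
          fun n hn => hEcard n ▸ hM n (le_of_max_le_left hn)
    _ ≤ coverMeasure T s Z₁ := coverSum_le_coverMeasure hε _ _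
    _ = 0 := hs

end BowenProduct

theorem BowenProduct.bowenEntropy_prod_le_add_upperCapacity_general {X : Type*} [MetricSpace X]
    [CompactSpace X] (T : X → X) (Z₁ Z₂ : Set X) :
    BowenProduct.bowenEntropy (Prod.map T T) (Z₁ ×ˢ Z₂) ≤
      BowenProduct.bowenEntropy T Z₁ + BowenProduct.upperCapacityEntropy T Z₂ := by
  rw [bowenEntropy.eq_1 T Z₁, ENNReal.iInf_add]
  refine le_iInf fun s => ?_
  rw [ENNReal.iInf_add]
  refine le_iInf fun hs => ENNReal.le_of_forall_pos_le_add fun δ hδ hfin => ?_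
  set u := upperCapacityEntropy T Z₂
  have hu : u ≠ ⊤ := (ENNReal.add_lt_top.1 hfin).2.ne
  have hut : u < ↑(u.toNNReal + δ) := by
    rw [ENNReal.coe_add, ENNReal.coe_toNNReal hu]
    exact ENNReal.lt_add_right hu (ENNReal.coe_ne_zero.2 hδ.ne')
  calc bowenEntropy (Prod.map T T) (Z₁ ×ˢ Z₂) ≤ ↑(s + (u.toNNReal + δ)) :=
        bowenEntropy_le_of_coverMeasure_eq_zero (coverMeasure_prod_eq_zero hs hut)
    _ = ↑s + u + δ := by rw [ENNReal.coe_add, ENNReal.coe_add, ENNReal.coe_toNNReal hu, add_assoc]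

/-- Upper bound for Bowen entropy of a product via upper capacity entropy:
`h^B(Z_1 × Z_2) ≤ h^B(Z_1) + h^U(Z_2)`, the product being taken in the product system
`(X × X, ρ, T × T)` with `ρ` the max product metric. -/
theorem BowenProduct.bowenEntropy_prod_le_add_upperCapacity {X : Type*} [MetricSpace X]
    [CompactSpace X] (T : X → X) (hT : Continuous T) (Z₁ Z₂ : Set X) :
    BowenProduct.bowenEntropy (Prod.map T T) (Z₁ ×ˢ Z₂) ≤
      BowenProduct.bowenEntropy T Z₁ + BowenProduct.upperCapacityEntropy T Z₂ :=
  BowenProduct.bowenEntropy_prod_le_add_upperCapacity_general T Z₁ Z₂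
end

section
/- Subadditivity of packing entropy for products of two different systems: let (X_1,d_1,T_1) and (X_2,d_2,T_2) be topological dynamical systems. For any Z_1 ⊆ X_1 and Z_2 ⊆ X_2, h^P(Z_1 × Z_2) ≤ h^P(Z_1) + h^P(Z_2), where the product is taken in the system (X_1×X_2, ρ, T_1×T_2). -/
/-!
If `𝒫^{sᵢ}_{ε/4}(Zᵢ) < ∞`, cover `Zᵢ` by countably many pieces on each of which some
`P^{sᵢ}_{Nᵢ,ε/4}` is finite, say `C₁` on `A ⊆ X₁` and `C₂` on `B ⊆ X₂`. In a disjoint family of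
closed Bowen `ε`-balls of the product centred in `A × B`, the centres `E` of the balls of a fixed
order `m` are `(m, ε)`-separated. Maximal `(m, ε/2)`-separated subsets `E₁`, `E₂` of the two
coordinate projections of `E` satisfy `#E ≤ #E₁ · #E₂`, and the closed `(m, ε/4)`-balls around the
points of `Eᵢ` are disjoint, so the balls of order `m` contribute at most
`C₁ C₂ e^{-(t - s₁ - s₂) m}`. Summing over `m ≥ N` gives a geometric tail, hence
`P^t_ε(A × B) = 0` whenever `t > s₁ + s₂`, and therefore
`h^P(Z₁ × Z₂, ε) ≤ h^P(Z₁, ε/4) + h^P(Z₂, ε/4)`.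
-/

open Filter Set
open scoped ENNReal NNReal

namespace BowenProduct

variable {X : Type*} [PseudoMetricSpace X]

def IsSeparated (T : X → X) (n : ℕ) (δ : ℝ) (E : Set X) : Prop :=
  E.Pairwise fun x y => ∃ i < n, δ < dist (T^[i] x) (T^[i] y)

lemma IsSeparated.mono {T : X → X} {n : ℕ} {δ δ' : ℝ} {E : Set X} (h : IsSeparated T n δ E)
    (hδ : δ' ≤ δ) : IsSeparated T n δ' E := fun _ hx _ hy hxy =>
  let ⟨i, hi, hlt⟩ := h hx hy hxy
  ⟨i, hi, hδ.trans_lt hlt⟩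

lemma exists_lt_dist_of_disjoint_bowenClosedBall {T : X → X} {n : ℕ} {x y : X} {ε : ℝ}
    (hε : 0 ≤ ε) (h : Disjoint (bowenClosedBall T n x ε) (bowenClosedBall T n y ε)) :
    ∃ i < n, ε < dist (T^[i] x) (T^[i] y) := by
  have hy : y ∈ bowenClosedBall T n y ε := fun k _ => by simpa using hε
  have hy' : y ∉ bowenClosedBall T n x ε := fun hy' => h.ne_of_mem hy' hy rfl
  simpa [bowenClosedBall] using hy'

lemma exists_isSeparated_subset_forall_exists_le (T : X → X) (n : ℕ) {β : ℝ}
    (hβ : 0 ≤ β) (P : Finset X) :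
    ∃ Q : Finset X, Q ⊆ P ∧ IsSeparated T n β Q ∧
      ∀ a ∈ P, ∃ x ∈ Q, ∀ i < n, dist (T^[i] a) (T^[i] x) ≤ β := by
  classical
  obtain ⟨Q, ⟨hQP, hQsep⟩, hQmax⟩ :
      ∃ Q : Finset X, Maximal (fun Q : Finset X => Q ⊆ P ∧ IsSeparated T n β Q) Q := by
    obtain ⟨Q, hQ⟩ :=
      Finset.exists_maximal (s := P.powerset.filter fun Q : Finset X => IsSeparated T n β Q)
      ⟨∅, Finset.mem_filter.2 ⟨Finset.empty_mem_powerset P, by simp [IsSeparated]⟩⟩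
    exact ⟨Q, by simpa using hQ⟩
  refine ⟨Q, hQP, hQsep, fun a ha => ?_⟩
  by_contra! hfar
  have haQ : a ∉ Q := fun haQ => by
    obtain ⟨i, -, hi⟩ := hfar a haQ
    simp only [dist_self] at hi
    linarith
  have hsep : IsSeparated T n β (insert a Q : Finset X) := by
    rw [Finset.coe_insert]
    refine hQsep.insert fun x hx _ => ⟨hfar x hx, ?_⟩
    obtain ⟨i, hi, hlt⟩ := hfar x hx
    exact ⟨i, hi, by rwa [dist_comm]⟩
  have := hQmax ⟨Finset.insert_subset ha hQP, hsep⟩ (Finset.subset_insert a Q)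
  exact haQ (this (Finset.mem_insert_self a Q))

lemma card_mul_exp_le_packingSum (T : X → X) (s : ℝ) {N n : ℕ} {δ : ℝ} {A : Set X}
    {E : Finset X} (hEA : ↑E ⊆ A) (hn : N ≤ n) (hE : IsSeparated T n (2 * δ) E) :
    (E.card : ℝ≥0∞) * ENNReal.ofReal (Real.exp (-s * n)) ≤ packingSum T s N δ A := by
  set F : Set (X × ℕ) := (fun x => (x, n)) '' E
  have hinj : InjOn (fun x => (x, n)) (E : Set X) := fun x _ y _ h => congrArg Prod.fst h
  have hdisj : F.PairwiseDisjoint fun p => bowenClosedBall T p.2 p.1 δ := by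
    rintro _ ⟨x, hx, rfl⟩ _ ⟨y, hy, rfl⟩ hxy
    obtain ⟨i, hi, hlt⟩ := hE hx hy fun h => hxy (h ▸ rfl)
    refine Set.disjoint_left.2 fun z hzx hzy => ?_
    linarith [hzx i hi, hzy i hi, dist_triangle_right (T^[i] x) (T^[i] y) (T^[i] z)]
  have hsum : ∑' p : F, ENNReal.ofReal (Real.exp (-s * ((p : X × ℕ).2 : ℝ))) =
      (E.card : ℝ≥0∞) * ENNReal.ofReal (Real.exp (-s * n)) := by
    rw [tsum_image (fun p : X × ℕ => ENNReal.ofReal (Real.exp (-s * (p.2 : ℝ)))) hinj,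
      Finset.tsum_subtype' E (fun _ => ENNReal.ofReal (Real.exp (-s * n))), Finset.sum_const,
      nsmul_eq_mul]
  rw [← hsum]
  refine le_iSup_of_le F <| le_iSup_of_le ((E.countable_toSet).image _) <|
    le_iSup_of_le ?_ <| le_iSup_of_le hdisj le_rfl
  rintro _ ⟨x, hx, rfl⟩
  exact ⟨hEA hx, hn⟩

lemma exists_isSeparated_of_pairwiseDisjoint {T : X → X} {ε : ℝ} (hε : 0 ≤ ε) {Z : Set X}
    {F : Set (X × ℕ)} (hFZ : ∀ p ∈ F, p.1 ∈ Z)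
    (hF : F.PairwiseDisjoint fun p => bowenClosedBall T p.2 p.1 ε) {m : ℕ} (D : Finset F)
    (hD : ∀ p ∈ D, (p : X × ℕ).2 = m) :
    ∃ E : Finset X, ↑E ⊆ Z ∧ IsSeparated T m ε E ∧ E.card = D.card := by
  classical
  have hinj : InjOn (fun p : F => (p : X × ℕ).1) D := fun p hp q hq hpq =>
    Subtype.ext (Prod.ext hpq ((hD p hp).trans (hD q hq).symm))
  refine ⟨D.image fun p : F => (p : X × ℕ).1, ?_, ?_, Finset.card_image_of_injOn hinj⟩
  · rintro _ hx
    obtain ⟨p, -, rfl⟩ := Finset.mem_image.1 hx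
    exact hFZ p p.2
  · rintro _ hx _ hy hxy
    obtain ⟨p, hp, rfl⟩ := Finset.mem_image.1 hx
    obtain ⟨q, hq, rfl⟩ := Finset.mem_image.1 hy
    have hpq : (p : X × ℕ) ≠ q := fun h => hxy (h ▸ rfl)
    have hdisj : Disjoint (bowenClosedBall T m p.1.1 ε) (bowenClosedBall T m q.1.1 ε) := by
      simpa only [Function.onFun, hD p hp, hD q hq] using hF p.2 q.2 hpq
    exact exists_lt_dist_of_disjoint_bowenClosedBall hε hdisj

lemma exists_cover_forall_exists_packingSum_ne_top {T : X → X} {s ε : ℝ} {Z : Set X}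
    (h : packingMeasureEps T s ε Z ≠ ⊤) :
    ∃ Zs : ℕ → Set X, Z ⊆ ⋃ i, Zs i ∧ ∀ i, ∃ N, packingSum T s N ε (Zs i) ≠ ⊤ := by
  obtain ⟨Zs, hZs⟩ := iInf_lt_iff.1 (lt_top_iff_ne_top.2 h)
  obtain ⟨hcov, hsum⟩ := iInf_lt_iff.1 hZs
  refine ⟨Zs, hcov, fun i => ?_⟩
  obtain ⟨N, hN⟩ := iInf_lt_iff.1 ((ENNReal.le_tsum i).trans_lt hsum)
  exact ⟨N, hN.ne⟩

lemma sum_pow_le_pow_mul_inv_one_sub (x : ℝ≥0∞) {N : ℕ} {S : Finset ℕ}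
    (hS : ∀ m ∈ S, N ≤ m) : ∑ m ∈ S, x ^ m ≤ x ^ N * (1 - x)⁻¹ :=
  calc ∑ m ∈ S, x ^ m = ∑ k ∈ S.image (· - N), x ^ N * x ^ k := by
        rw [Finset.sum_image fun m hm m' hm' h => by have := hS m hm; have := hS m' hm'; omega]
        refine Finset.sum_congr rfl fun m hm => ?_
        rw [← pow_add, Nat.add_sub_cancel' (hS m hm)]
    _ ≤ ∑' k, x ^ N * x ^ k := ENNReal.sum_le_tsum _
    _ = x ^ N * (1 - x)⁻¹ := by rw [ENNReal.tsum_mul_left, ENNReal.tsum_geometric]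

section Product

variable {X₁ X₂ : Type*} [PseudoMetricSpace X₁] [PseudoMetricSpace X₂]
  (T₁ : X₁ → X₁) (T₂ : X₂ → X₂)

lemma dist_prodMap_iterate (i : ℕ) (p q : X₁ × X₂) :
    dist ((Prod.map T₁ T₂)^[i] p) ((Prod.map T₁ T₂)^[i] q) =
      max (dist (T₁^[i] p.1) (T₁^[i] q.1)) (dist (T₂^[i] p.2) (T₂^[i] q.2)) := by
  rw [Prod.map_iterate, Prod.dist_eq, Prod.map_fst, Prod.map_fst, Prod.map_snd, Prod.map_snd]

lemma exists_isSeparated_card_le_card_mul_card {n : ℕ} {ε : ℝ} (hε : 0 ≤ ε)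
    (E : Finset (X₁ × X₂)) (hE : IsSeparated (Prod.map T₁ T₂) n ε E) :
    ∃ (E₁ : Finset X₁) (E₂ : Finset X₂),
      ↑E₁ ⊆ Prod.fst '' (E : Set (X₁ × X₂)) ∧ ↑E₂ ⊆ Prod.snd '' (E : Set (X₁ × X₂)) ∧
      IsSeparated T₁ n (ε / 2) E₁ ∧ IsSeparated T₂ n (ε / 2) E₂ ∧
      E.card ≤ E₁.card * E₂.card := by
  classical
  obtain ⟨E₁, hE₁, hsep₁, hnear₁⟩ :=
    exists_isSeparated_subset_forall_exists_le T₁ n (β := ε / 2) (by linarith) (E.image Prod.fst)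
  obtain ⟨E₂, hE₂, hsep₂, hnear₂⟩ :=
    exists_isSeparated_subset_forall_exists_le T₂ n (β := ε / 2) (by linarith) (E.image Prod.snd)
  refine ⟨E₁, E₂, ?_, ?_, hsep₁, hsep₂, ?_⟩
  · rw [← Finset.coe_image]; exact_mod_cast hE₁
  · rw [← Finset.coe_image]; exact_mod_cast hE₂
  rw [← Finset.card_product]
  -- two points of `E` that are `ε/2`-close to the same point of `E₁ ×ˢ E₂` are `ε`-close
  refine Finset.card_le_card_of_forall_subsingleton
    (fun p c => ∀ i < n, dist ((Prod.map T₁ T₂)^[i] p) ((Prod.map T₁ T₂)^[i] c) ≤ ε / 2)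
    (fun p hp => ?_) (fun c _ p ⟨hp, hpc⟩ q ⟨hq, hqc⟩ => ?_)
  · obtain ⟨x, hx, hpx⟩ := hnear₁ p.1 (Finset.mem_image_of_mem _ hp)
    obtain ⟨y, hy, hpy⟩ := hnear₂ p.2 (Finset.mem_image_of_mem _ hp)
    refine ⟨(x, y), Finset.mem_product.2 ⟨hx, hy⟩, fun i hi => ?_⟩
    rw [dist_prodMap_iterate]
    exact max_le (hpx i hi) (hpy i hi)
  · by_contra hpq
    obtain ⟨i, hi, hlt⟩ := hE hp hq hpq
    have := dist_triangle_right ((Prod.map T₁ T₂)^[i] p) ((Prod.map T₁ T₂)^[i] q)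
      ((Prod.map T₁ T₂)^[i] c)
    linarith [hpc i hi, hqc i hi]

lemma card_mul_exp_le_packingSum_mul (s₁ s₂ : ℝ) {N₁ N₂ m : ℕ} {ε : ℝ}
    (hε : 0 ≤ ε) {A : Set X₁} {B : Set X₂} {E : Finset (X₁ × X₂)} (hEAB : ↑E ⊆ A ×ˢ B)
    (hE : IsSeparated (Prod.map T₁ T₂) m ε E) (hN₁ : N₁ ≤ m) (hN₂ : N₂ ≤ m) :
    (E.card : ℝ≥0∞) * ENNReal.ofReal (Real.exp (-(s₁ + s₂) * m)) ≤
      packingSum T₁ s₁ N₁ (ε / 4) A * packingSum T₂ s₂ N₂ (ε / 4) B := by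
  obtain ⟨E₁, E₂, hE₁, hE₂, hsep₁, hsep₂, hcard⟩ :=
    exists_isSeparated_card_le_card_mul_card T₁ T₂ hε E hE
  have hE₁A : ↑E₁ ⊆ A := (hE₁.trans (image_mono hEAB)).trans (fst_image_prod_subset A B)
  have hE₂B : ↑E₂ ⊆ B := (hE₂.trans (image_mono hEAB)).trans (snd_image_prod_subset A B)
  have hweight : ENNReal.ofReal (Real.exp (-(s₁ + s₂) * m)) =
      ENNReal.ofReal (Real.exp (-s₁ * m)) * ENNReal.ofReal (Real.exp (-s₂ * m)) := by
    rw [← ENNReal.ofReal_mul (Real.exp_nonneg _), ← Real.exp_add]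
    ring_nf
  calc (E.card : ℝ≥0∞) * ENNReal.ofReal (Real.exp (-(s₁ + s₂) * m))
      ≤ (E₁.card * E₂.card : ℕ) * ENNReal.ofReal (Real.exp (-(s₁ + s₂) * m)) := by
        gcongr
    _ = (E₁.card * ENNReal.ofReal (Real.exp (-s₁ * m))) *
          (E₂.card * ENNReal.ofReal (Real.exp (-s₂ * m))) := by
        rw [hweight]; push_cast; ring
    _ ≤ packingSum T₁ s₁ N₁ (ε / 4) A * packingSum T₂ s₂ N₂ (ε / 4) B := by
        gcongr
        · exact card_mul_exp_le_packingSum T₁ s₁ hE₁A hN₁ (hsep₁.mono (by linarith))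
        · exact card_mul_exp_le_packingSum T₂ s₂ hE₂B hN₂ (hsep₂.mono (by linarith))

lemma packingSum_prod_le (s₁ s₂ t : ℝ) {N₁ N₂ N : ℕ} {ε : ℝ} (hε : 0 ≤ ε)
    (A : Set X₁) (B : Set X₂) (hN₁ : N₁ ≤ N) (hN₂ : N₂ ≤ N) :
    packingSum (Prod.map T₁ T₂) t N ε (A ×ˢ B) ≤
      packingSum T₁ s₁ N₁ (ε / 4) A * packingSum T₂ s₂ N₂ (ε / 4) B *
        (ENNReal.ofReal (Real.exp (-(t - (s₁ + s₂)))) ^ N *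
          (1 - ENNReal.ofReal (Real.exp (-(t - (s₁ + s₂)))))⁻¹) := by
  set x := ENNReal.ofReal (Real.exp (-(t - (s₁ + s₂))))
  set C := packingSum T₁ s₁ N₁ (ε / 4) A * packingSum T₂ s₂ N₂ (ε / 4) B
  have hweight : ∀ m : ℕ, ENNReal.ofReal (Real.exp (-t * m)) =
      ENNReal.ofReal (Real.exp (-(s₁ + s₂) * m)) * x ^ m := fun m => by
    rw [← ENNReal.ofReal_pow (Real.exp_nonneg _), ← Real.exp_nat_mul,
      ← ENNReal.ofReal_mul (Real.exp_nonneg _), ← Real.exp_add]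
    ring_nf
  refine iSup_le fun F => iSup_le fun _ => iSup_le fun hF => iSup_le fun hdisj => ?_
  rw [ENNReal.tsum_eq_iSup_sum]
  refine iSup_le fun G => ?_
  set order : F → ℕ := fun p => (p : (X₁ × X₂) × ℕ).2
  have hfiber : ∀ m ∈ G.image order,
      (G.filter fun p => order p = m).card • ENNReal.ofReal (Real.exp (-t * m)) ≤ C * x ^ m := by
    intro m hm
    obtain ⟨E, hEAB, hEsep, hEcard⟩ := exists_isSeparated_of_pairwiseDisjoint hε
      (fun p hp => (hF p hp).1) hdisj (G.filter fun p => order p = m) fun p hp =>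
        (Finset.mem_filter.1 hp).2
    obtain ⟨p, -, rfl⟩ := Finset.mem_image.1 hm
    rw [nsmul_eq_mul, hweight, ← mul_assoc, ← hEcard]
    gcongr
    exact card_mul_exp_le_packingSum_mul T₁ T₂ s₁ s₂ hε hEAB hEsep
      (hN₁.trans (hF p p.2).2) (hN₂.trans (hF p p.2).2)
  calc ∑ p ∈ G, ENNReal.ofReal (Real.exp (-t * (order p : ℝ)))
      = ∑ m ∈ G.image order,
          (G.filter fun p => order p = m).card • ENNReal.ofReal (Real.exp (-t * m)) :=
        Finset.sum_comp (fun m : ℕ => ENNReal.ofReal (Real.exp (-t * m))) order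
    _ ≤ ∑ m ∈ G.image order, C * x ^ m := Finset.sum_le_sum hfiber
    _ ≤ C * (x ^ N * (1 - x)⁻¹) := by
        rw [← Finset.mul_sum]
        gcongr
        refine sum_pow_le_pow_mul_inv_one_sub x fun m hm => ?_
        obtain ⟨p, -, rfl⟩ := Finset.mem_image.1 hm
        exact (hF p p.2).2

lemma packingPre_prod_eq_zero {s₁ s₂ t ε : ℝ} {N₁ N₂ : ℕ} {A : Set X₁} {B : Set X₂}
    (hε : 0 ≤ ε) (hC₁ : packingSum T₁ s₁ N₁ (ε / 4) A ≠ ⊤)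
    (hC₂ : packingSum T₂ s₂ N₂ (ε / 4) B ≠ ⊤) (hst : s₁ + s₂ < t) :
    packingPre (Prod.map T₁ T₂) t ε (A ×ˢ B) = 0 := by
  set x := ENNReal.ofReal (Real.exp (-(t - (s₁ + s₂))))
  have hx : x < 1 := ENNReal.ofReal_lt_one.2 (Real.exp_lt_one_iff.2 (by linarith))
  have hinv : (1 - x)⁻¹ ≠ ⊤ := ENNReal.inv_ne_top.2 (tsub_pos_of_lt hx).ne'
  have htend : Tendsto (fun N => packingSum T₁ s₁ N₁ (ε / 4) A * packingSum T₂ s₂ N₂ (ε / 4) B *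
      (x ^ N * (1 - x)⁻¹)) atTop (nhds 0) := by
    simpa using ENNReal.Tendsto.const_mul
      (ENNReal.Tendsto.mul_const (ENNReal.tendsto_pow_atTop_nhds_zero_of_lt_one hx) (Or.inr hinv))
      (Or.inr (ENNReal.mul_ne_top hC₁ hC₂))
  refine nonpos_iff_eq_zero.1 (ge_of_tendsto htend (eventually_atTop.2 ⟨max N₁ N₂, fun N hN => ?_⟩))
  exact (iInf_le _ N).trans (packingSum_prod_le T₁ T₂ s₁ s₂ t hε A B
    ((le_max_left _ _).trans hN) ((le_max_right _ _).trans hN))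

lemma packingMeasureEps_prod_eq_zero {s₁ s₂ t ε : ℝ} {Z₁ : Set X₁}
    {Z₂ : Set X₂} (hε : 0 ≤ ε) (h₁ : packingMeasureEps T₁ s₁ (ε / 4) Z₁ ≠ ⊤)
    (h₂ : packingMeasureEps T₂ s₂ (ε / 4) Z₂ ≠ ⊤) (hst : s₁ + s₂ < t) :
    packingMeasureEps (Prod.map T₁ T₂) t ε (Z₁ ×ˢ Z₂) = 0 := by
  obtain ⟨Zs₁, hcov₁, hfin₁⟩ := exists_cover_forall_exists_packingSum_ne_top h₁
  obtain ⟨Zs₂, hcov₂, hfin₂⟩ := exists_cover_forall_exists_packingSum_ne_top h₂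
  choose N₁ hN₁ using hfin₁
  choose N₂ hN₂ using hfin₂
  let Zs (k : ℕ) : Set (X₁ × X₂) := Zs₁ k.unpair.1 ×ˢ Zs₂ k.unpair.2
  have hcov : Z₁ ×ˢ Z₂ ⊆ ⋃ k, Zs k := by
    rintro ⟨z₁, z₂⟩ ⟨hz₁, hz₂⟩
    obtain ⟨i, hi⟩ := mem_iUnion.1 (hcov₁ hz₁)
    obtain ⟨j, hj⟩ := mem_iUnion.1 (hcov₂ hz₂)
    exact mem_iUnion.2 ⟨Nat.pair i j, by simpa [Zs] using ⟨hi, hj⟩⟩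
  have hzero : ∀ k, packingPre (Prod.map T₁ T₂) t ε (Zs k) = 0 :=
    fun k => packingPre_prod_eq_zero T₁ T₂ hε (hN₁ _) (hN₂ _) hst
  exact nonpos_iff_eq_zero.1 ((iInf₂_le Zs hcov).trans_eq (ENNReal.tsum_eq_zero.2 hzero))

lemma packingEntropyEps_prod_le (Z₁ : Set X₁) (Z₂ : Set X₂) {ε : ℝ} (hε : 0 ≤ ε) :
    packingEntropyEps (Prod.map T₁ T₂) ε (Z₁ ×ˢ Z₂) ≤
      packingEntropyEps T₁ (ε / 4) Z₁ + packingEntropyEps T₂ (ε / 4) Z₂ :=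
  ENNReal.le_iInf_add_iInf fun s₁ s₂ => ENNReal.le_iInf_add_iInf fun h₁ h₂ => by
    refine ENNReal.le_of_forall_pos_le_add fun δ hδ _ => ?_
    have hzero : packingMeasureEps (Prod.map T₁ T₂) ((s₁ + s₂ + δ : ℝ≥0) : ℝ) ε (Z₁ ×ˢ Z₂) = 0 :=
      packingMeasureEps_prod_eq_zero T₁ T₂ hε (h₁ ▸ ENNReal.zero_ne_top)
        (h₂ ▸ ENNReal.zero_ne_top) (by push_cast; linarith [NNReal.coe_pos.2 hδ])
    exact_mod_cast iInf₂_le (f := fun (s : ℝ≥0) (_ : packingMeasureEps (Prod.map T₁ T₂) s ε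
      (Z₁ ×ˢ Z₂) = 0) => (s : ℝ≥0∞)) (s₁ + s₂ + δ) hzero

end Product

end BowenProduct

theorem BowenProduct.packingEntropy_prod_le₂_general {X₁ X₂ : Type*}
    [MetricSpace X₁] [MetricSpace X₂]
    (T₁ : X₁ → X₁) (T₂ : X₂ → X₂)
    (Z₁ : Set X₁) (Z₂ : Set X₂) :
    BowenProduct.packingEntropy (Prod.map T₁ T₂) (Z₁ ×ˢ Z₂) ≤
      BowenProduct.packingEntropy T₁ Z₁ + BowenProduct.packingEntropy T₂ Z₂ := by
  refine iSup₂_le fun ε hε => (packingEntropyEps_prod_le T₁ T₂ Z₁ Z₂ hε.le).trans ?_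
  have hε4 : 0 < ε / 4 := by positivity
  exact add_le_add
    (le_iSup₂ (f := fun ε (_ : 0 < ε) => packingEntropyEps T₁ ε Z₁) (ε / 4) hε4)
    (le_iSup₂ (f := fun ε (_ : 0 < ε) => packingEntropyEps T₂ ε Z₂) (ε / 4) hε4)

/-- Subadditivity of packing entropy for products of two different systems:
`h^P(Z_1 × Z_2) ≤ h^P(Z_1) + h^P(Z_2)` in the system `(X_1 × X_2, ρ, T_1 × T_2)` with `ρ`
the max product metric. -/
theorem BowenProduct.packingEntropy_prod_le₂ {X₁ X₂ : Type*}
    [MetricSpace X₁] [CompactSpace X₁] [MetricSpace X₂] [CompactSpace X₂]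
    (T₁ : X₁ → X₁) (hT₁ : Continuous T₁) (T₂ : X₂ → X₂) (hT₂ : Continuous T₂)
    (Z₁ : Set X₁) (Z₂ : Set X₂) :
    BowenProduct.packingEntropy (Prod.map T₁ T₂) (Z₁ ×ˢ Z₂) ≤
      BowenProduct.packingEntropy T₁ Z₁ + BowenProduct.packingEntropy T₂ Z₂ :=
  BowenProduct.packingEntropy_prod_le₂_general T₁ T₂ Z₁ Z₂
end
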